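/- Supersolution inequality for the logarithmic blow-up function near Γ_in. Under the assumptions of the nonlocal estimate on U_r (Ω of class W^{2,∞}, (M), (J0), (J1), x̄ ∈ Γ_in, r = r(x̄), U_r(x) = −log(d(x)) + (3/2) log r, and A > 0 the constant with I_ξ[U_r](x) ≤ A d(x)^{−σ} on B_{r/2}(x̄) ∩ Ω), there exists r̃ = r̃(r, A, σ) with r̃ ≤ r such that for every ξ ≤ C_j⁻¹ r/2, every x ∈ B_{r̃/2}(x̄) ∩ Ω and every α ∈ 𝒜, one has −b(x,α)·DU_r(x) − I_ξ[U_r](x) ≥ 0. -/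

import Mathlib

set_option autoImplicit false

/- Common framework for censored nonlocal Hamilton–Jacobi equations with
Neumann boundary conditions (Barles-type viscosity solutions). -/

open Set Metric MeasureTheory Filter Topology Function
open scoped RealInnerProductSpace NNReal ENNReal

noncomputable section

namespace Censored

abbrev Euc (N : ℕ) : Type := EuclideanSpace ℝ (Fin N)

variable {N : ℕ}

/-- Signed distance to the boundary of `Ω`, positive inside `Ω`. -/
def sdist (Ω : Set (Euc N)) (x : Euc N) : ℝ := infDist x Ωᶜ - infDist x Ω

/-- A modulus of continuity. -/
def IsModulus (ω : ℝ → ℝ) : Prop :=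
  (∀ s, 0 ≤ ω s) ∧ Monotone ω ∧ Tendsto ω (nhdsWithin 0 (Ioi 0)) (nhds 0)

/-- A `W^{2,∞}` boundary chart for `Ω` at `s`, with radius `r`: a diffeomorphism of
class `W^{2,∞}` (i.e. `C^1` with Lipschitz differential, with inverse of the same
regularity) whose `N`-th component coincides with the signed distance. -/
def IsW2Chart (hN : 0 < N) (Ω : Set (Euc N)) (s : Euc N) (r : ℝ)
    (ψ ψinv : Euc N → Euc N) : Prop :=
  0 < r ∧
  ContDiffOn ℝ 1 ψ (ball s r) ∧
  (∃ L : ℝ≥0, LipschitzOnWith L (fun x => fderiv ℝ ψ x) (ball s r)) ∧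
  ContDiffOn ℝ 1 ψinv (ψ '' ball s r) ∧
  (∃ L : ℝ≥0, LipschitzOnWith L (fun x => fderiv ℝ ψinv x) (ψ '' ball s r)) ∧
  (∀ x ∈ ball s r, ψinv (ψ x) = x) ∧
  (∀ x ∈ ball s r, ψ x ⟨N - 1, Nat.sub_lt hN Nat.one_pos⟩ = sdist Ω x)

/-- Assumption (O): `Ω` is open of class `W^{2,∞}`. -/
def IsW2Domain (hN : 0 < N) (Ω : Set (Euc N)) : Prop :=
  IsOpen Ω ∧ ∀ s ∈ frontier Ω, ∃ r ψ ψinv, IsW2Chart hN Ω s r ψ ψinv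

/-- `n` is the exterior unit normal vector field to `∂Ω`:  `n = -D d` where `d` is the
signed distance (positive inside). -/
def IsExteriorNormal (Ω : Set (Euc N)) (n : Euc N → Euc N) : Prop :=
  ∀ x ∈ frontier Ω, ‖n x‖ = 1 ∧ HasGradientAt (sdist Ω) (-(n x)) x

/-- First part of assumption (M): the measures `μ_x` have a (measurable, nonnegative)
density `g x` with respect to Lebesgue measure, bounded by `Cμ |z|^{-(N+σ)}`. -/
def AssumptionM1 (Ω : Set (Euc N)) (g : Euc N → Euc N → ℝ) (Cμ σ : ℝ) : Prop :=
  0 < Cμ ∧ σ ∈ Ioo (0:ℝ) 1 ∧ (∀ x, Measurable (g x)) ∧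
  (∀ x ∈ closure Ω, ∀ z : Euc N, 0 ≤ g x z) ∧
  (∀ x ∈ closure Ω, ∀ z : Euc N, g x z ≤ Cμ * ‖z‖ ^ (-((N : ℝ) + σ)))

/-- Assumption (M). -/
def AssumptionM (Ω : Set (Euc N)) (g : Euc N → Euc N → ℝ) (Cμ Dμ σ : ℝ) : Prop :=
  AssumptionM1 Ω g Cμ σ ∧ 0 < Dμ ∧
  (∀ x ∈ closure Ω, ∀ y ∈ closure Ω, ∀ z : Euc N,
    |g x z - g y z| ≤ Dμ * ‖x - y‖ * ‖z‖ ^ (-((N : ℝ) + σ)))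

/-- Assumption (J0). -/
def AssumptionJ0 (Ω : Set (Euc N)) (j : Euc N → Euc N → Euc N) (Aj : ℝ) : Prop :=
  ∀ x ∈ closure Ω,
    ContDiff ℝ 1 (j x) ∧ Function.Bijective (j x) ∧
    ContDiff ℝ 1 (Function.invFun (j x)) ∧
    ∀ z : Euc N, ‖fderiv ℝ (Function.invFun (j x)) z‖ ≤ Aj

/-- Assumption (J1). -/
def AssumptionJ1 (Ω : Set (Euc N)) (j : Euc N → Euc N → Euc N) (Cj' Cj Dj : ℝ) : Prop :=
  0 < Cj' ∧ 0 < Cj ∧ 0 < Dj ∧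
  (∀ x ∈ closure Ω, ∀ z : Euc N, Cj' * ‖z‖ ≤ ‖j x z‖ ∧ ‖j x z‖ ≤ Cj * ‖z‖) ∧
  (∀ x ∈ closure Ω, ∀ y ∈ closure Ω, ∀ z : Euc N, ‖j x z - j y z‖ ≤ Dj * ‖z‖ * ‖x - y‖)

/-- The truncated censored nonlocal term over `{|z| ≥ ξ}` (`I^ξ`). -/
def Iout (Ω : Set (Euc N)) (j : Euc N → Euc N → Euc N) (g : Euc N → Euc N → ℝ)
    (ξ : ℝ) (u : Euc N → ℝ) (x : Euc N) : ℝ :=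
  ∫ z in {z : Euc N | ξ ≤ ‖z‖ ∧ x + j x z ∈ closure Ω}, (u (x + j x z) - u x) * g x z

/-- The truncated censored nonlocal term over `{|z| < ξ}` (`I_ξ`). -/
def Iin (Ω : Set (Euc N)) (j : Euc N → Euc N → Euc N) (g : Euc N → Euc N → ℝ)
    (ξ : ℝ) (φ : Euc N → ℝ) (x : Euc N) : ℝ :=
  ∫ z in {z : Euc N | ‖z‖ < ξ ∧ x + j x z ∈ closure Ω}, (φ (x + j x z) - φ x) * g x z

/-- The censored nonlocal operator of order `σ < 1`, as a principal value. -/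
def Ipv (Ω : Set (Euc N)) (j : Euc N → Euc N → Euc N) (g : Euc N → Euc N → ℝ)
    (u : Euc N → ℝ) (x : Euc N) : ℝ :=
  limUnder (nhdsWithin (0:ℝ) (Ioi 0)) (fun δ =>
    ∫ z in {z : Euc N | δ < ‖z‖ ∧ x + j x z ∈ closure Ω}, (u (x + j x z) - u x) * g x z)

/-- `u` is bounded on `S`. -/
def BddOn (u : Euc N → ℝ) (S : Set (Euc N)) : Prop := ∃ M, ∀ x ∈ S, |u x| ≤ M

/-- `u = u(x,t)` is bounded on `S × I`. -/
def BddOnT (u : Euc N → ℝ → ℝ) (S : Set (Euc N)) (I : Set ℝ) : Prop :=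
  ∃ M, ∀ x ∈ S, ∀ t ∈ I, |u x t| ≤ M

/-- Viscosity subsolution, with generalized Neumann boundary conditions, of the
stationary equation `F(x, u, Du, I[u]) = 0` in `Ω`, `∂u/∂n = 0` on `∂Ω`,
for the censored operator determined by `j, g` (with constant `Cj` from (J1)). -/
def IsSubSol (Ω : Set (Euc N)) (j : Euc N → Euc N → Euc N) (g : Euc N → Euc N → ℝ)
    (n : Euc N → Euc N) (Cj : ℝ) (F : Euc N → ℝ → Euc N → ℝ → ℝ) (u : Euc N → ℝ) : Prop :=
  ∀ ξ > (0:ℝ), ∀ φ : Euc N → ℝ, ContDiff ℝ 1 φ →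
    ∀ x ∈ closure Ω,
      (∀ y ∈ closedBall x (Cj * ξ) ∩ closure Ω, u y - φ y ≤ u x - φ x) →
      (x ∈ Ω → F x (u x) (gradient φ x) (Iin Ω j g ξ φ x + Iout Ω j g ξ u x) ≤ 0) ∧
      (x ∈ frontier Ω →
        min (F x (u x) (gradient φ x) (Iin Ω j g ξ φ x + Iout Ω j g ξ u x))
          ⟪gradient φ x, n x⟫ ≤ 0)

/-- Viscosity supersolution, with generalized Neumann boundary conditions. -/
def IsSuperSol (Ω : Set (Euc N)) (j : Euc N → Euc N → Euc N) (g : Euc N → Euc N → ℝ)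
    (n : Euc N → Euc N) (Cj : ℝ) (F : Euc N → ℝ → Euc N → ℝ → ℝ) (v : Euc N → ℝ) : Prop :=
  ∀ ξ > (0:ℝ), ∀ φ : Euc N → ℝ, ContDiff ℝ 1 φ →
    ∀ x ∈ closure Ω,
      (∀ y ∈ closedBall x (Cj * ξ) ∩ closure Ω, v x - φ x ≤ v y - φ y) →
      (x ∈ Ω → 0 ≤ F x (v x) (gradient φ x) (Iin Ω j g ξ φ x + Iout Ω j g ξ v x)) ∧
      (x ∈ frontier Ω →
        0 ≤ max (F x (v x) (gradient φ x) (Iin Ω j g ξ φ x + Iout Ω j g ξ v x))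
          ⟪gradient φ x, n x⟫)

/-- `F` corresponding to the stationary equation `u - I[u] + H(x,Du) = 0`. -/
def statF (H : Euc N → Euc N → ℝ) : Euc N → ℝ → Euc N → ℝ → ℝ :=
  fun x r p I => r - I + H x p

/-- `F` corresponding to the ergodic equation `λ - I[w] - H(x,Dw) = 0`. -/
def ergF (H : Euc N → Euc N → ℝ) (lam : ℝ) : Euc N → ℝ → Euc N → ℝ → ℝ :=
  fun x _ p I => lam - I - H x p

/-- Parabolic viscosity subsolution with generalized Neumann boundary conditions,
for `F(x, t, ∂_t u, u, Du, I[u(·,t)]) = 0` in `Ω × (0,∞)`. -/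
def IsParSubSol (Ω : Set (Euc N)) (j : Euc N → Euc N → Euc N) (g : Euc N → Euc N → ℝ)
    (n : Euc N → Euc N) (Cj : ℝ) (F : Euc N → ℝ → ℝ → ℝ → Euc N → ℝ → ℝ)
    (u : Euc N → ℝ → ℝ) : Prop :=
  ∀ ξ > (0:ℝ), ∀ φ : Euc N → ℝ → ℝ,
    ContDiff ℝ 1 (fun q : Euc N × ℝ => φ q.1 q.2) →
    ∀ x ∈ closure Ω, ∀ t ∈ Ioi (0:ℝ),
      (∀ y ∈ closedBall x (Cj * ξ) ∩ closure Ω, ∀ s ∈ Ioi (0:ℝ), |s - t| ≤ ξ →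
        u y s - φ y s ≤ u x t - φ x t) →
      (x ∈ Ω →
        F x t (deriv (φ x) t) (u x t) (gradient (fun y => φ y t) x)
          (Iin Ω j g ξ (fun y => φ y t) x + Iout Ω j g ξ (fun y => u y t) x) ≤ 0) ∧
      (x ∈ frontier Ω →
        min (F x t (deriv (φ x) t) (u x t) (gradient (fun y => φ y t) x)
              (Iin Ω j g ξ (fun y => φ y t) x + Iout Ω j g ξ (fun y => u y t) x))
          ⟪gradient (fun y => φ y t) x, n x⟫ ≤ 0)

/-- Parabolic viscosity supersolution with generalized Neumann boundary conditions. -/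
def IsParSuperSol (Ω : Set (Euc N)) (j : Euc N → Euc N → Euc N) (g : Euc N → Euc N → ℝ)
    (n : Euc N → Euc N) (Cj : ℝ) (F : Euc N → ℝ → ℝ → ℝ → Euc N → ℝ → ℝ)
    (v : Euc N → ℝ → ℝ) : Prop :=
  ∀ ξ > (0:ℝ), ∀ φ : Euc N → ℝ → ℝ,
    ContDiff ℝ 1 (fun q : Euc N × ℝ => φ q.1 q.2) →
    ∀ x ∈ closure Ω, ∀ t ∈ Ioi (0:ℝ),
      (∀ y ∈ closedBall x (Cj * ξ) ∩ closure Ω, ∀ s ∈ Ioi (0:ℝ), |s - t| ≤ ξ →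
        v x t - φ x t ≤ v y s - φ y s) →
      (x ∈ Ω →
        0 ≤ F x t (deriv (φ x) t) (v x t) (gradient (fun y => φ y t) x)
          (Iin Ω j g ξ (fun y => φ y t) x + Iout Ω j g ξ (fun y => v y t) x)) ∧
      (x ∈ frontier Ω →
        0 ≤ max (F x t (deriv (φ x) t) (v x t) (gradient (fun y => φ y t) x)
              (Iin Ω j g ξ (fun y => φ y t) x + Iout Ω j g ξ (fun y => v y t) x))
          ⟪gradient (fun y => φ y t) x, n x⟫)

/-- `F` for the parabolic equation `∂_t u - I[u] + H(x,t,u,Du) = 0`. -/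
def parF (H : Euc N → ℝ → ℝ → Euc N → ℝ) : Euc N → ℝ → ℝ → ℝ → Euc N → ℝ → ℝ :=
  fun x t pt r p I => pt - I + H x t r p

/-! ### Hamiltonians: Bellman form and coercive form (stationary) -/




/-- `H` is of Bellman type with drift `b` and cost `l` over the control set `A`. -/
def IsBellman {A : Type} (b : Euc N → A → Euc N) (l : Euc N → A → ℝ)
    (H : Euc N → Euc N → ℝ) : Prop :=
  ∀ x p, H x p = ⨆ α : A, (-⟪b x α, p⟫ - l x α)

/-- Continuity and boundedness of the Bellman data `b, l`. -/
def BellmanData {A : Type} [TopologicalSpace A]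
    (b : Euc N → A → Euc N) (l : Euc N → A → ℝ) : Prop :=
  Continuous (fun q : Euc N × A => b q.1 q.2) ∧ (∃ M, ∀ x α, ‖b x α‖ ≤ M) ∧
  Continuous (fun q : Euc N × A => l q.1 q.2) ∧ (∃ M, ∀ x α, |l x α| ≤ M)

/-- Assumption (C): uniform continuity of the cost `l`. -/
def AssumptionC (Ω : Set (Euc N)) {A : Type} (l : Euc N → A → ℝ) : Prop :=
  ∃ ω, IsModulus ω ∧ ∀ (α : A), ∀ x ∈ closure Ω, ∀ y ∈ closure Ω,
    |l x α - l y α| ≤ ω ‖x - y‖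

/-- Assumption (L): uniform Lipschitz continuity of the drift `b`. -/
def AssumptionL (Ω : Set (Euc N)) {A : Type} (b : Euc N → A → Euc N) : Prop :=
  ∃ C > (0:ℝ), ∀ (α : A), ∀ x ∈ closure Ω, ∀ y ∈ closure Ω,
    ‖b x α - b y α‖ ≤ C * ‖x - y‖

/-- The part of the boundary where the drift points inwards for every control. -/
def GammaIn (Ω : Set (Euc N)) (n : Euc N → Euc N) {A : Type}
    (b : Euc N → A → Euc N) : Set (Euc N) :=
  {x | x ∈ frontier Ω ∧ ∀ α : A, ⟪b x α, n x⟫ < 0}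

/-- The part of the boundary where the drift points outwards for every control. -/
def GammaOut (Ω : Set (Euc N)) (n : Euc N → Euc N) {A : Type}
    (b : Euc N → A → Euc N) : Set (Euc N) :=
  {x | x ∈ frontier Ω ∧ ∀ α : A, 0 < ⟪b x α, n x⟫}

/-- The part of the boundary where the drift points both inwards and outwards. -/
def GammaMix (Ω : Set (Euc N)) (n : Euc N → Euc N) {A : Type}
    (b : Euc N → A → Euc N) : Set (Euc N) :=
  {x | x ∈ frontier Ω ∧ ∃ α₁ α₂ : A, ⟪b x α₁, n x⟫ < 0 ∧ 0 < ⟪b x α₂, n x⟫}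

/-- `S` is a union of connected components of `T`. -/
def IsUnionOfComponents (S T : Set (Euc N)) : Prop :=
  S ⊆ T ∧ ∀ x ∈ S, connectedComponentIn T x ⊆ S

/-- Assumption (B). -/
def AssumptionB (Ω : Set (Euc N)) (n : Euc N → Euc N) {A : Type}
    (b : Euc N → A → Euc N) : Prop :=
  GammaIn Ω n b ∪ GammaOut Ω n b ∪ GammaMix Ω n b = frontier Ω ∧
  IsUnionOfComponents (GammaIn Ω n b) (frontier Ω) ∧
  IsUnionOfComponents (GammaOut Ω n b) (frontier Ω) ∧
  IsUnionOfComponents (GammaMix Ω n b) (frontier Ω)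

/-- All the structural assumptions on a Bellman Hamiltonian: (C), (L), (B) together
with continuity and boundedness of the data. -/
def StatBellmanOK (Ω : Set (Euc N)) (n : Euc N → Euc N) {A : Type} [TopologicalSpace A]
    (b : Euc N → A → Euc N) (l : Euc N → A → ℝ) (H : Euc N → Euc N → ℝ) : Prop :=
  BellmanData b l ∧ IsBellman b l H ∧ AssumptionC Ω l ∧ AssumptionL Ω b ∧ AssumptionB Ω n b

/-- Assumption (H1): superfractional coercivity of order `m > σ`. -/
def AssumptionH1 (Ω : Set (Euc N)) (H : Euc N → Euc N → ℝ) (σ m c₀ D : ℝ) : Prop :=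
  σ < m ∧ 0 < c₀ ∧ 0 < D ∧ ∀ x ∈ closure Ω, ∀ p : Euc N, c₀ * ‖p‖ ^ m - D ≤ H x p

/-- Assumption (Ha) (sublinear case) with constant `C` and modulus `ω₁`. -/
def AssumptionHa (H : Euc N → Euc N → ℝ) (C : ℝ) (ω₁ : ℝ → ℝ) : Prop :=
  0 < C ∧ IsModulus ω₁ ∧
  ∀ x y p q : Euc N, H y p - H x q ≤ ω₁ ‖x - y‖ * (1 + ‖p‖) + C * ‖p - q‖

/-- Assumption (Hb) (superlinear case) with constants `m, A, Cb`. -/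
def AssumptionHb (H : Euc N → Euc N → ℝ) (m A Cb : ℝ) : Prop :=
  1 < m ∧ 0 < A ∧ 0 < Cb ∧
  ∀ μ ∈ Ioo (0:ℝ) 1, ∀ x p : Euc N,
    H x p - μ * H x (μ⁻¹ • p) ≤ (1 - μ) * (Cb * (1 - m) * ‖p‖ ^ m + A)

/-- Assumption (Hc) with constant `C` and modulus `ω₁`. -/
def AssumptionHc (H : Euc N → Euc N → ℝ) (m C : ℝ) (ω₁ : ℝ → ℝ) : Prop :=
  0 < C ∧ IsModulus ω₁ ∧
  ∀ x y p q : Euc N,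
    H y p - H x q ≤ ω₁ ‖x - y‖ * (1 + (max ‖p‖ ‖q‖) ^ m)
      + C * ‖p - q‖ * (max ‖p‖ ‖q‖) ^ (m - 1)

/-- The structural assumptions on a coercive Hamiltonian:
(H1), (Ha) (sublinear) or (H1), (Hb), (Hc) (superlinear). -/
def StatCoerciveOK (Ω : Set (Euc N)) (H : Euc N → Euc N → ℝ) (σ : ℝ) : Prop :=
  ∃ m c₀ D, AssumptionH1 Ω H σ m c₀ D ∧
    ((m ≤ 1 ∧ ∃ C ω₁, AssumptionHa H C ω₁) ∨
     (∃ A Cb, AssumptionHb H m A Cb ∧ ∃ C ω₁, AssumptionHc H m C ω₁))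

/-- Assumption (E). -/
def AssumptionE (Ω : Set (Euc N)) (H : Euc N → Euc N → ℝ) : Prop :=
  ∀ R > (0:ℝ), ∃ HR : ℝ, ∀ x ∈ closure Ω, ∀ p : Euc N, ‖p‖ ≤ R → |H x p| ≤ HR

/-! ### Parabolic Hamiltonians and assumptions -/

/-- `H(x,t,r,p)` is of (time-dependent) Bellman type. -/
def IsParBellman {A : Type} (lam : Euc N → ℝ → A → ℝ) (b : Euc N → ℝ → A → Euc N)
    (l : Euc N → ℝ → A → ℝ) (H : Euc N → ℝ → ℝ → Euc N → ℝ) : Prop :=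
  ∀ x t r p, H x t r p = ⨆ α : A, (lam x t α * r - ⟪b x t α, p⟫ - l x t α)

/-- Continuity and boundedness of the parabolic Bellman data. -/
def ParBellmanData {A : Type} [TopologicalSpace A] (lam : Euc N → ℝ → A → ℝ)
    (b : Euc N → ℝ → A → Euc N) (l : Euc N → ℝ → A → ℝ) : Prop :=
  Continuous (fun q : Euc N × ℝ × A => lam q.1 q.2.1 q.2.2) ∧
  (∃ M, ∀ x t α, |lam x t α| ≤ M) ∧
  Continuous (fun q : Euc N × ℝ × A => b q.1 q.2.1 q.2.2) ∧
  (∃ M, ∀ x t α, ‖b x t α‖ ≤ M) ∧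
  Continuous (fun q : Euc N × ℝ × A => l q.1 q.2.1 q.2.2) ∧
  (∃ M, ∀ x t α, |l x t α| ≤ M)

/-- Assumption (C'): uniform continuity of `l` and `λ` in `(x,t)`, uniformly in `α`. -/
def AssumptionC' (Ω : Set (Euc N)) {A : Type} (lam l : Euc N → ℝ → A → ℝ) : Prop :=
  (∃ ω, IsModulus ω ∧ ∀ (α : A), ∀ x ∈ closure Ω, ∀ y ∈ closure Ω,
      ∀ t ∈ Ici (0:ℝ), ∀ s ∈ Ici (0:ℝ), |l x t α - l y s α| ≤ ω (‖x - y‖ + |t - s|)) ∧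
  (∃ ω, IsModulus ω ∧ ∀ (α : A), ∀ x ∈ closure Ω, ∀ y ∈ closure Ω,
      ∀ t ∈ Ici (0:ℝ), ∀ s ∈ Ici (0:ℝ), |lam x t α - lam y s α| ≤ ω (‖x - y‖ + |t - s|))

/-- Assumption (L'): uniform Lipschitz continuity of the drift `b` in `(x,t)`. -/
def AssumptionL' (Ω : Set (Euc N)) {A : Type} (b : Euc N → ℝ → A → Euc N) : Prop :=
  ∃ C > (0:ℝ), ∀ (α : A), ∀ x ∈ closure Ω, ∀ y ∈ closure Ω, ∀ s ∈ Ici (0:ℝ), ∀ t ∈ Ici (0:ℝ),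
    ‖b x s α - b y t α‖ ≤ C * (‖x - y‖ + |s - t|)

/-- Inward part of the boundary for time-dependent drift. -/
def GammaInT (Ω : Set (Euc N)) (n : Euc N → Euc N) {A : Type}
    (b : Euc N → ℝ → A → Euc N) : Set (Euc N) :=
  {x | x ∈ frontier Ω ∧ ∀ t ∈ Ici (0:ℝ), ∀ α : A, ⟪b x t α, n x⟫ < 0}

/-- Outward part of the boundary for time-dependent drift. -/
def GammaOutT (Ω : Set (Euc N)) (n : Euc N → Euc N) {A : Type}
    (b : Euc N → ℝ → A → Euc N) : Set (Euc N) :=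
  {x | x ∈ frontier Ω ∧ ∀ t ∈ Ici (0:ℝ), ∀ α : A, 0 < ⟪b x t α, n x⟫}

/-- Mixed part of the boundary for time-dependent drift. -/
def GammaMixT (Ω : Set (Euc N)) (n : Euc N → Euc N) {A : Type}
    (b : Euc N → ℝ → A → Euc N) : Set (Euc N) :=
  {x | x ∈ frontier Ω ∧ ∀ t ∈ Ici (0:ℝ),
    ∃ α₁ α₂ : A, ⟪b x t α₁, n x⟫ < 0 ∧ 0 < ⟪b x t α₂, n x⟫}

/-- Assumption (B'). -/
def AssumptionB' (Ω : Set (Euc N)) (n : Euc N → Euc N) {A : Type}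
    (b : Euc N → ℝ → A → Euc N) : Prop :=
  GammaInT Ω n b ∪ GammaOutT Ω n b ∪ GammaMixT Ω n b = frontier Ω ∧
  IsUnionOfComponents (GammaInT Ω n b) (frontier Ω) ∧
  IsUnionOfComponents (GammaOutT Ω n b) (frontier Ω) ∧
  IsUnionOfComponents (GammaMixT Ω n b) (frontier Ω)

/-- All the structural assumptions on a parabolic Bellman Hamiltonian: (C'), (L'), (B'). -/
def ParBellmanOK (Ω : Set (Euc N)) (n : Euc N → Euc N) {A : Type} [TopologicalSpace A]
    (lam : Euc N → ℝ → A → ℝ) (b : Euc N → ℝ → A → Euc N) (l : Euc N → ℝ → A → ℝ)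
    (H : Euc N → ℝ → ℝ → Euc N → ℝ) : Prop :=
  ParBellmanData lam b l ∧ IsParBellman lam b l H ∧
  AssumptionC' Ω lam l ∧ AssumptionL' Ω b ∧ AssumptionB' Ω n b

/-- Assumption (H'): monotonicity of `H` in the `u` variable. -/
def AssumptionH' (Ω : Set (Euc N)) (H : Euc N → ℝ → ℝ → Euc N → ℝ) : Prop :=
  ∃ K : ℝ, ∀ R > (0:ℝ), ∃ γ, -K ≤ γ ∧
    ∀ x ∈ closure Ω, ∀ t ∈ Icc (0:ℝ) R, ∀ r s : ℝ, |r| ≤ R → |s| ≤ R → s ≤ r →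
      ∀ p : Euc N, γ * (r - s) ≤ H x t r p - H x t s p

/-- Assumption (H''): the monotonicity constants `γ_R` are bounded below by some `γ₀ > 0`. -/
def AssumptionH'' (Ω : Set (Euc N)) (H : Euc N → ℝ → ℝ → Euc N → ℝ) : Prop :=
  ∃ γ₀ > (0:ℝ), ∀ R > (0:ℝ), ∃ γ, γ₀ ≤ γ ∧
    ∀ x ∈ closure Ω, ∀ t ∈ Icc (0:ℝ) R, ∀ r s : ℝ, |r| ≤ R → |s| ≤ R → s ≤ r →
      ∀ p : Euc N, γ * (r - s) ≤ H x t r p - H x t s p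

/-- Assumption (E'). -/
def AssumptionE' (Ω : Set (Euc N)) (H : Euc N → ℝ → ℝ → Euc N → ℝ) : Prop :=
  ∀ T > (0:ℝ), ∀ R > (0:ℝ), ∃ HR : ℝ, ∀ x ∈ Ω, ∀ t ∈ Icc (0:ℝ) T, ∀ r : ℝ, ∀ p : Euc N,
    |r| ≤ R → ‖p‖ ≤ R → |H x t r p| ≤ HR

/-- Assumption (H0'): separated structure `H(x,t,r,p) = H₀(x,r,p) - f(x,t)`. -/
def AssumptionH0' (H : Euc N → ℝ → ℝ → Euc N → ℝ) : Prop :=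
  ∃ (H₀ : Euc N → ℝ → Euc N → ℝ) (f : Euc N → ℝ → ℝ),
    Continuous (fun q : Euc N × ℝ × Euc N => H₀ q.1 q.2.1 q.2.2) ∧
    UniformContinuous (fun q : Euc N × ℝ => f q.1 q.2) ∧
    (∃ M, ∀ x t, |f x t| ≤ M) ∧
    ∀ x t r p, H x t r p = H₀ x r p - f x t

/-- Assumption (He'): `H` satisfies (H1), (Ha) in `x`, uniformly in `t`
and uniformly on compact sets in `r` (sublinearly coercive case). -/
def AssumptionHe' (Ω : Set (Euc N)) (H : Euc N → ℝ → ℝ → Euc N → ℝ) (σ : ℝ) : Prop :=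
  ∃ m : ℝ, σ < m ∧ m ≤ 1 ∧
    ∀ R > (0:ℝ),
      (∃ c₀ > (0:ℝ), ∃ D > (0:ℝ), ∀ x ∈ closure Ω, ∀ t ∈ Ici (0:ℝ), ∀ r : ℝ, |r| ≤ R →
        ∀ p : Euc N, c₀ * ‖p‖ ^ m - D ≤ H x t r p) ∧
      (∃ C > (0:ℝ), ∃ ω₁, IsModulus ω₁ ∧ ∀ x y : Euc N, ∀ t ∈ Ici (0:ℝ), ∀ r : ℝ, |r| ≤ R →
        ∀ p q : Euc N, H y t r p - H x t r q ≤ ω₁ ‖x - y‖ * (1 + ‖p‖) + C * ‖p - q‖)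

/-- Assumption (He''): `H` satisfies (H1), (Hb), (Hc) in `x`, uniformly in `t`
and uniformly on compact sets in `r` (superlinearly coercive case, exponent `m`). -/
def AssumptionHe'' (Ω : Set (Euc N)) (H : Euc N → ℝ → ℝ → Euc N → ℝ) (σ m : ℝ) : Prop :=
  1 < m ∧ σ < m ∧
  ∀ R > (0:ℝ),
    (∃ c₀ > (0:ℝ), ∃ D > (0:ℝ), ∀ x ∈ closure Ω, ∀ t ∈ Ici (0:ℝ), ∀ r : ℝ, |r| ≤ R →
      ∀ p : Euc N, c₀ * ‖p‖ ^ m - D ≤ H x t r p) ∧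
    (∃ A > (0:ℝ), ∃ Cb > (0:ℝ), ∀ μ ∈ Ioo (0:ℝ) 1, ∀ x ∈ closure Ω, ∀ t ∈ Ici (0:ℝ),
      ∀ r : ℝ, |r| ≤ R → ∀ p : Euc N,
        H x t r p - μ * H x t r (μ⁻¹ • p) ≤ (1 - μ) * (Cb * (1 - m) * ‖p‖ ^ m + A)) ∧
    (∃ C > (0:ℝ), ∃ ω₁, IsModulus ω₁ ∧ ∀ x y : Euc N, ∀ t ∈ Ici (0:ℝ), ∀ r : ℝ, |r| ≤ R →
      ∀ p q : Euc N, H y t r p - H x t r q ≤ ω₁ ‖x - y‖ * (1 + (max ‖p‖ ‖q‖) ^ m)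
        + C * ‖p - q‖ * (max ‖p‖ ‖q‖) ^ (m - 1))

/-- Structural parabolic coercive assumptions: (H0') and (He') or (He''). -/
def ParCoerciveOK (Ω : Set (Euc N)) (H : Euc N → ℝ → ℝ → Euc N → ℝ) (σ : ℝ) : Prop :=
  AssumptionH0' H ∧ (AssumptionHe' Ω H σ ∨ ∃ m, AssumptionHe'' Ω H σ m)

/-! ### Iterative covering property -/

/-- The iterated reachable sets `X_r(x)` of the censored jump process. -/
def Xiter (Ω : Set (Euc N)) (j : Euc N → Euc N → Euc N) (g : Euc N → Euc N → ℝ)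
    (x : Euc N) : ℕ → Set (Euc N)
  | 0 => {x}
  | r + 1 => (⋃ ξ ∈ Xiter Ω j g x r,
      (fun z => ξ + j ξ z) '' closure (Function.support (g ξ))) ∩ closure Ω

/-- Iterative covering property: `𝒳(x) = Ω` (i.e. the closure of the reachable set
is all of `closure Ω`) for every `x ∈ Ω`. -/
def CoveringProperty (Ω : Set (Euc N)) (j : Euc N → Euc N → Euc N)
    (g : Euc N → Euc N → ℝ) : Prop :=
  ∀ x ∈ Ω, closure (⋃ r : ℕ, Xiter Ω j g x r) = closure Ω

/-! Since `x₀ ∈ Γ_in` and `d` is `C¹` near `x₀` with `Dd(x₀) = -n(x₀)`, compactness of the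
control set gives `c > 0` with `Dd(x) · b(x, α) ≥ c` for all `α` and all `x` near `x₀`.
Hence `-b · DU_r = d⁻¹ Dd · b ≥ c / d`, which dominates the nonlocal bound `A d^{-σ}` as
soon as `d` is small, because `σ < 1`; and `d(x) → 0` as `x → x₀`. -/

lemma continuous_sdist (Ω : Set (Euc N)) : Continuous (sdist Ω) :=
  (continuous_infDist_pt _).sub (continuous_infDist_pt _)

lemma sdist_eq_zero_of_mem_frontier {Ω : Set (Euc N)} {x : Euc N} (hx : x ∈ frontier Ω) :
    sdist Ω x = 0 := by
  rw [frontier_eq_closure_inter_closure] at hx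
  rw [sdist, infDist_zero_of_mem_closure hx.1, infDist_zero_of_mem_closure hx.2, sub_zero]

lemma sdist_pos_of_mem {Ω : Set (Euc N)} (hΩ : IsOpen Ω) (hΩc : Ωᶜ.Nonempty) {x : Euc N}
    (hx : x ∈ Ω) : 0 < sdist Ω x := by
  rw [sdist, infDist_zero_of_mem hx, sub_zero]
  exact (infDist_pos_iff_notMem_closure hΩc).1 (by simpa [hΩ.isClosed_compl.closure_eq])

lemma tendsto_sdist_nhdsWithin_pos {Ω : Set (Euc N)} (hΩ : IsOpen Ω) {x₀ : Euc N}
    (hx₀ : x₀ ∈ frontier Ω) : Tendsto (sdist Ω) (𝓝[Ω] x₀) (𝓝[>] 0) := by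
  have hx₀c : x₀ ∈ Ωᶜ := fun h => hx₀.2 (hΩ.interior_eq.symm ▸ h)
  refine tendsto_nhdsWithin_iff.2 ⟨?_, eventually_nhdsWithin_of_forall
    fun x hx => sdist_pos_of_mem hΩ ⟨x₀, hx₀c⟩ hx⟩
  rw [← sdist_eq_zero_of_mem_frontier hx₀]
  exact (continuous_sdist Ω).continuousWithinAt

lemma IsW2Chart.contDiffOn_sdist {hN : 0 < N} {Ω : Set (Euc N)} {s : Euc N} {r : ℝ}
    {ψ ψinv : Euc N → Euc N} (h : IsW2Chart hN Ω s r ψ ψinv) :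
    ContDiffOn ℝ 1 (sdist Ω) (ball s r) :=
  ((EuclideanSpace.proj _ : Euc N →L[ℝ] ℝ).contDiff.comp_contDiffOn h.2.1).congr
    fun x hx => (h.2.2.2.2.2.2 x hx).symm

lemma exists_pos_eventually_forall_le {X A : Type*} [TopologicalSpace X] [TopologicalSpace A]
    [CompactSpace A] {F : X → A → ℝ} {x₀ : X}
    (hF : ∀ α, ContinuousAt (fun q : X × A => F q.1 q.2) (x₀, α)) (hpos : ∀ α, 0 < F x₀ α) :
    ∃ c > 0, ∀ᶠ x in 𝓝 x₀, ∀ α, c ≤ F x α := by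
  have hF₀ : ContinuousOn (F x₀) univ := fun α _ =>
    ((hF α).comp (continuous_const.prodMk continuous_id).continuousAt).continuousWithinAt
  obtain ⟨c, hc, hcF⟩ := isCompact_univ.exists_forall_le' hF₀ fun α _ => hpos α
  refine ⟨c / 2, half_pos hc, ?_⟩
  have := isCompact_univ.eventually_forall_of_forall_eventually
    (P := fun x α => c / 2 ≤ F x α) fun α _ =>
      ((hF α).eventually_const_lt (by linarith [hcF α (mem_univ α)])).mono fun _ h => h.le
  simpa using this

lemma exists_pos_eventually_le_fderiv_sdist_apply {hN : 0 < N} {Ω : Set (Euc N)}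
    {n : Euc N → Euc N} (hn : IsExteriorNormal Ω n) {A : Type} [TopologicalSpace A]
    [CompactSpace A] {b : Euc N → A → Euc N} (hbc : Continuous (fun q : Euc N × A => b q.1 q.2))
    {x₀ : Euc N} (hx₀ : x₀ ∈ GammaIn Ω n b) {r : ℝ} {ψ ψinv : Euc N → Euc N}
    (hchart : IsW2Chart hN Ω x₀ r ψ ψinv) :
    ∃ c > 0, ∀ᶠ x in 𝓝 x₀, ∀ α, c ≤ fderiv ℝ (sdist Ω) x (b x α) := by
  have hball : ball x₀ r ∈ 𝓝 x₀ := ball_mem_nhds x₀ hchart.1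
  have hDd : ContinuousAt (fderiv ℝ (sdist Ω)) x₀ :=
    (hchart.contDiffOn_sdist.continuousOn_fderiv_of_isOpen isOpen_ball le_rfl).continuousAt hball
  refine exists_pos_eventually_forall_le (fun α => ?_) fun α => ?_
  · exact (hDd.comp continuousAt_fst).clm_apply hbc.continuousAt
  · rw [(hn x₀ hx₀.1).2.hasFDerivAt.fderiv, InnerProductSpace.toDual_apply_apply, inner_neg_left,
      real_inner_comm]
    exact neg_pos.2 (hx₀.2 α)

lemma neg_inner_gradient_neg_log_add_const {E : Type*} [NormedAddCommGroup E]
    [InnerProductSpace ℝ E] [CompleteSpace E] {f : E → ℝ} {x : E} (hf : DifferentiableAt ℝ f x)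
    (hfx : f x ≠ 0) (k : ℝ) (v : E) :
    -⟪v, gradient (fun y => -Real.log (f y) + k) x⟫ = (f x)⁻¹ * fderiv ℝ f x v := by
  have hU : HasFDerivAt (fun y => -Real.log (f y) + k) (-((f x)⁻¹ • fderiv ℝ f x)) x :=
    ((Real.hasDerivAt_log hfx).comp_hasFDerivAt x hf.hasFDerivAt).neg.add_const k
  rw [hU.hasGradientAt.gradient, real_inner_comm, InnerProductSpace.toDual_symm_apply]
  simp

lemma eventually_mul_rpow_neg_le_mul_inv {σ : ℝ} (hσ : σ < 1) (a : ℝ) {c : ℝ} (hc : 0 < c) :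
    ∀ᶠ d in 𝓝[>] (0 : ℝ), a * d ^ (-σ) ≤ c * d⁻¹ := by
  have hlim : Tendsto (fun d : ℝ => a * d ^ (1 - σ)) (𝓝[>] 0) (𝓝 0) := by
    have h := (Real.continuousAt_rpow_const 0 (1 - σ) (Or.inr (by linarith))).tendsto
    rw [Real.zero_rpow (by linarith)] at h
    simpa using (h.mono_left nhdsWithin_le_nhds).const_mul a
  filter_upwards [hlim.eventually_lt_const hc, self_mem_nhdsWithin] with d hd (hd0 : 0 < d)
  rw [show -σ = (1 - σ) - 1 by ring, Real.rpow_sub_one hd0.ne', ← mul_div_assoc, div_eq_mul_inv]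
  exact mul_le_mul_of_nonneg_right hd.le (inv_nonneg.2 hd0.le)

theorem log_blowup_supersolution_general
    (hN : 0 < N) (Ω : Set (Euc N)) (hΩ : IsW2Domain hN Ω)
    (n : Euc N → Euc N) (hn : IsExteriorNormal Ω n)
    (g : Euc N → Euc N → ℝ) (Cμ Dμ σ : ℝ) (hM : AssumptionM Ω g Cμ Dμ σ)
    (j : Euc N → Euc N → Euc N)
    (Cj : ℝ)
    {A : Type} [MetricSpace A] [CompactSpace A]
    (b : Euc N → A → Euc N)
    (hbc : Continuous (fun q : Euc N × A => b q.1 q.2))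
    (x₀ : Euc N) (hx₀ : x₀ ∈ GammaIn Ω n b)
    (r : ℝ) (ψ ψinv : Euc N → Euc N) (hchart : IsW2Chart hN Ω x₀ r ψ ψinv)
    (Acst : ℝ)
    (hbound : ∀ ξ : ℝ, 0 < ξ → ξ ≤ Cj⁻¹ * r / 2 →
      ∀ x ∈ ball x₀ (r / 2) ∩ Ω,
        Iin Ω j g ξ (fun y => -Real.log (sdist Ω y) + (3 / 2) * Real.log r) x ≤
          Acst * sdist Ω x ^ (-σ)) :
    ∃ rt : ℝ, 0 < rt ∧ rt ≤ r ∧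
      ∀ ξ : ℝ, 0 < ξ → ξ ≤ Cj⁻¹ * r / 2 →
        ∀ x ∈ ball x₀ (rt / 2) ∩ Ω, ∀ α : A,
          0 ≤ -⟪b x α,
              gradient (fun y => -Real.log (sdist Ω y) + (3 / 2) * Real.log r) x⟫
            - Iin Ω j g ξ (fun y => -Real.log (sdist Ω y) + (3 / 2) * Real.log r) x := by
  obtain ⟨c, hc, hdrift⟩ := exists_pos_eventually_le_fderiv_sdist_apply hn hbc hx₀ hchart
  have hd := tendsto_sdist_nhdsWithin_pos hΩ.1 hx₀.1
  have hgood : ∀ᶠ x in 𝓝[Ω] x₀, x ∈ ball x₀ (r / 2) ∧ DifferentiableAt ℝ (sdist Ω) x ∧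
      (∀ α, c ≤ fderiv ℝ (sdist Ω) x (b x α)) ∧ 0 < sdist Ω x ∧
      Acst * sdist Ω x ^ (-σ) ≤ c * (sdist Ω x)⁻¹ := by
    have hdiff : ∀ᶠ x in 𝓝 x₀, DifferentiableAt ℝ (sdist Ω) x :=
      (isOpen_ball.eventually_mem (mem_ball_self hchart.1)).mono fun x hx =>
        (hchart.contDiffOn_sdist.contDiffAt (isOpen_ball.mem_nhds hx)).differentiableAt
          one_ne_zero
    filter_upwards [nhdsWithin_le_nhds (ball_mem_nhds x₀ (half_pos hchart.1)),
      nhdsWithin_le_nhds hdiff, nhdsWithin_le_nhds hdrift, hd self_mem_nhdsWithin,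
      hd (eventually_mul_rpow_neg_le_mul_inv hM.1.2.1.2 Acst hc)] with x h₁ h₂ h₃ h₄ h₅
    exact ⟨h₁, h₂, h₃, h₄, h₅⟩
  obtain ⟨ε, hε, hεgood⟩ := Metric.mem_nhdsWithin_iff.1 hgood
  refine ⟨min r ε, lt_min hchart.1 hε, min_le_left _ _, fun ξ hξ hξr x ⟨hx, hxΩ⟩ α => ?_⟩
  have hxε : x ∈ ball x₀ ε :=
    ball_subset_ball (by linarith [min_le_right r ε]) hx
  obtain ⟨hxr, hdiff, hcx, hdpos, hpow⟩ := hεgood ⟨hxε, hxΩ⟩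
  rw [neg_inner_gradient_neg_log_add_const hdiff hdpos.ne', sub_nonneg]
  calc Iin Ω j g ξ (fun y => -Real.log (sdist Ω y) + (3 / 2) * Real.log r) x
      ≤ Acst * sdist Ω x ^ (-σ) := hbound ξ hξ hξr x ⟨hxr, hxΩ⟩
    _ ≤ c * (sdist Ω x)⁻¹ := hpow
    _ ≤ (sdist Ω x)⁻¹ * fderiv ℝ (sdist Ω) x (b x α) := by
      rw [mul_comm]; exact mul_le_mul_of_nonneg_left (hcx α) (inv_nonneg.2 hdpos.le)

/-- **Supersolution inequality for the logarithmic blow-up function (second part of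
Lemma `blow`).**  Under the assumptions of the nonlocal estimate on
`U_r(x) = -log d(x) + (3/2) log r`, if `A > 0` is a constant with
`I_ξ[U_r] ≤ A d^{-σ}` on `B_{r/2}(x̄) ∩ Ω`, then there is `r̃ = r̃(r,A,σ) ≤ r` such that
`-b(x,α)·DU_r(x) - I_ξ[U_r](x) ≥ 0` on `B_{r̃/2}(x̄) ∩ Ω` for every `0 < ξ ≤ C_j⁻¹ r/2`
and every control `α`. -/
theorem log_blowup_supersolution
    (hN : 0 < N) (Ω : Set (Euc N)) (hΩ : IsW2Domain hN Ω)
    (n : Euc N → Euc N) (hn : IsExteriorNormal Ω n)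
    (g : Euc N → Euc N → ℝ) (Cμ Dμ σ : ℝ) (hM : AssumptionM Ω g Cμ Dμ σ)
    (j : Euc N → Euc N → Euc N) (Aj : ℝ) (hJ0 : AssumptionJ0 Ω j Aj)
    (Cj' Cj Dj : ℝ) (hJ1 : AssumptionJ1 Ω j Cj' Cj Dj)
    {A : Type} [MetricSpace A] [CompactSpace A] [Nonempty A]
    (b : Euc N → A → Euc N)
    (hbc : Continuous (fun q : Euc N × A => b q.1 q.2)) (hbb : ∃ M, ∀ x α, ‖b x α‖ ≤ M)
    (x₀ : Euc N) (hx₀ : x₀ ∈ GammaIn Ω n b)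
    (r : ℝ) (ψ ψinv : Euc N → Euc N) (hchart : IsW2Chart hN Ω x₀ r ψ ψinv)
    (Acst : ℝ) (hA : 0 < Acst)
    (hbound : ∀ ξ : ℝ, 0 < ξ → ξ ≤ Cj⁻¹ * r / 2 →
      ∀ x ∈ ball x₀ (r / 2) ∩ Ω,
        Iin Ω j g ξ (fun y => -Real.log (sdist Ω y) + (3 / 2) * Real.log r) x ≤
          Acst * sdist Ω x ^ (-σ)) :
    ∃ rt : ℝ, 0 < rt ∧ rt ≤ r ∧
      ∀ ξ : ℝ, 0 < ξ → ξ ≤ Cj⁻¹ * r / 2 →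
        ∀ x ∈ ball x₀ (rt / 2) ∩ Ω, ∀ α : A,
          0 ≤ -⟪b x α,
              gradient (fun y => -Real.log (sdist Ω y) + (3 / 2) * Real.log r) x⟫
            - Iin Ω j g ξ (fun y => -Real.log (sdist Ω y) + (3 / 2) * Real.log r) x :=
  log_blowup_supersolution_general hN Ω hΩ n hn g Cμ Dμ σ hM j Cj b hbc x₀ hx₀ r ψ ψinv hchart Acst
    hbound

end Censored

end
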